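/- Let K and L₀(t,x) = λ² G_κ(t,x)² be as above. Then the space-time convolution identity (K ⋆ L₀)(t,x) = K(t,x) − L₀(t,x) holds for all t > 0 and x ∈ ℝ, where (f ⋆ g)(t,x) = ∫₀ᵗ∫_ℝ f(t−s, x−y) g(s,y) dy ds. -/

import Mathlib

/-!
In light-cone coordinates `a = κs + y`, `b = κs - y` (Jacobian `1 / (2κ)`), and with
`ξ = κt + x`, `η = κt - x`, the integrand `K(t - s, x - y) L₀(s, y)` is supported on the
rectangle `[0, ξ] × [0, η]`, where `(κ(t - s))² - (x - y)² = (ξ - a)(η - b)`. Expanding `I₀` as a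
power series, the `k`-th term of the integrand is a multiple of `(ξ - a)ᵏ (η - b)ᵏ`, whose
integral over the rectangle is `(ξη)ᵏ⁺¹ / (k + 1)²`. This shifts the `k`-th coefficient of `K`
to the `(k + 1)`-st, so the convolution is the series of `K(t, x)` without its constant term
`λ²/4 = L₀(t, x)`.
-/

open Real MeasureTheory

/-- Wave kernel `G_κ(t,x) = (1/2)·1_{|x| ≤ κt}` for `t ≥ 0`, and `0` for `t < 0`. -/
noncomputable def waveKernel (κ t x : ℝ) : ℝ :=
  if 0 ≤ t ∧ |x| ≤ κ * t then 1 / 2 else 0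

/-- `T_κ(t,x) = (t − |x|/(2κ))·1_{|x| ≤ 2κt}`. -/
noncomputable def Tker (κ t x : ℝ) : ℝ :=
  if |x| ≤ 2 * κ * t then t - |x| / (2 * κ) else 0

/-- Modified Bessel function of the first kind of order zero:
`I₀(z) = Σ_{k≥0} (z²/4)ᵏ/(k!)²`. -/
noncomputable def besselI0 (z : ℝ) : ℝ :=
  ∑' k : ℕ, (z ^ 2 / 4) ^ k / (k.factorial : ℝ) ^ 2

/-- `K(t,x) = (λ²/4) I₀(√(λ²((κt)² − x²)/(2κ)))` on `|x| ≤ κt`, zero otherwise. -/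
noncomputable def Kker (κ lam t x : ℝ) : ℝ :=
  if |x| ≤ κ * t then
    lam ^ 2 / 4 * besselI0 (Real.sqrt (lam ^ 2 * ((κ * t) ^ 2 - x ^ 2) / (2 * κ)))
  else 0


theorem integral_integral_lightCone {E : Type*} [NormedAddCommGroup E] [NormedSpace ℝ E]
    {f : ℝ × ℝ → E} (hf : Integrable f) {κ : ℝ} (hκ : κ ≠ 0) :
    ∫ s, ∫ y, f (κ * s + y, κ * s - y) = |2 * κ|⁻¹ • ∫ p, f p := by
  let T : ℝ × ℝ →ₗ[ℝ] ℝ × ℝ :=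
    (κ • LinearMap.fst ℝ ℝ ℝ + LinearMap.snd ℝ ℝ ℝ).prod
      (κ • LinearMap.fst ℝ ℝ ℝ - LinearMap.snd ℝ ℝ ℝ)
  have hdet : LinearMap.det T = -(2 * κ) := by
    rw [← LinearMap.det_toMatrix (Module.Basis.finTwoProd ℝ), Matrix.det_fin_two]
    simp [LinearMap.toMatrix_apply, T]
    ring
  have hmap := Measure.map_linearMap_addHaar_eq_smul_addHaar (volume : Measure (ℝ × ℝ))
    (f := T) (by rw [hdet]; simpa using hκ)
  rw [hdet, inv_neg, abs_neg] at hmap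
  have hTm : Measurable T := T.continuous_of_finiteDimensional.measurable
  have hf' : Integrable f (Measure.map T volume) := hmap ▸ hf.smul_measure ENNReal.ofReal_ne_top
  have hfT : Integrable (f ∘ T) := (integrable_map_measure hf'.1 hTm.aemeasurable).1 hf'
  have hchange := integral_map hTm.aemeasurable hf'.1
  rw [hmap, integral_smul_measure, ENNReal.toReal_ofReal (abs_nonneg _)] at hchange
  rw [← abs_inv, hchange]
  exact (integral_prod (f ∘ T) hfT).symm

section DominatedSeries

variable {α E : Type*} [MeasurableSpace α] {μ : Measure α} [NormedAddCommGroup E]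
  {f : ℕ → α → E} {F : α → E} {M : ℕ → ℝ} {g : α → ℝ}

theorem MeasureTheory.Integrable.of_hasSum_of_norm_le_mul
    (hf : ∀ k, AEStronglyMeasurable (f k) μ) (hM : Summable M) (hg : Integrable g μ)
    (hfg : ∀ k a, ‖f k a‖ ≤ M k * g a) (hF : ∀ a, HasSum (fun k => f k a) (F a)) :
    Integrable F μ := by
  have hmeas : AEStronglyMeasurable F μ :=
    aestronglyMeasurable_of_tendsto_ae Filter.atTop
      (fun n => Finset.aestronglyMeasurable_fun_sum (Finset.range n) fun k _ => hf k)
      (ae_of_all _ fun a => (hF a).tendsto_sum_nat)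
  refine (hg.const_mul (∑' k, M k)).mono' hmeas (ae_of_all _ fun a => ?_)
  exact (hF a).norm_le_of_bounded (hM.hasSum.mul_right (g a)) (fun k => hfg k a)

theorem MeasureTheory.hasSum_integral_of_norm_le_mul [NormedSpace ℝ E]
    (hf : ∀ k, AEStronglyMeasurable (f k) μ) (hM : Summable M) (hg : Integrable g μ)
    (hfg : ∀ k a, ‖f k a‖ ≤ M k * g a) (hF : ∀ a, HasSum (fun k => f k a) (F a)) :
    HasSum (fun k => ∫ a, f k a ∂μ) (∫ a, F a ∂μ) := by
  refine hasSum_integral_of_dominated_convergence (fun k a => M k * g a) hf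
    (fun k => ae_of_all _ (hfg k)) (ae_of_all _ fun a => hM.mul_right (g a)) ?_
    (ae_of_all _ hF)
  simp only [tsum_mul_right]
  exact hg.const_mul _

end DominatedSeries

theorem summable_pow_div_factorial_sq (w : ℝ) :
    Summable fun k : ℕ => w ^ k / (k.factorial : ℝ) ^ 2 := by
  refine (Real.summable_pow_div_factorial |w|).of_norm_bounded fun k => ?_
  have hk : (1 : ℝ) ≤ k.factorial := by exact_mod_cast k.factorial_pos
  rw [norm_div, norm_pow, Real.norm_eq_abs, norm_pow, Real.norm_natCast]
  exact div_le_div_of_nonneg_left (by positivity) (by positivity) (by nlinarith)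

theorem hasSum_besselI0_sqrt {u : ℝ} (hu : 0 ≤ u) :
    HasSum (fun k : ℕ => (u / 4) ^ k / (k.factorial : ℝ) ^ 2) (besselI0 (√u)) := by
  rw [besselI0, Real.sq_sqrt hu]
  exact (summable_pow_div_factorial_sq _).hasSum

noncomputable def truncPow (k : ℕ) (ξ a : ℝ) : ℝ :=
  (Set.Icc 0 ξ).indicator (fun a => (ξ - a) ^ k) a

theorem truncPow_of_mem (k : ℕ) {ξ a : ℝ} (ha : a ∈ Set.Icc 0 ξ) :
    truncPow k ξ a = (ξ - a) ^ k :=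
  Set.indicator_of_mem ha _

theorem truncPow_of_notMem (k : ℕ) {ξ a : ℝ} (ha : a ∉ Set.Icc 0 ξ) : truncPow k ξ a = 0 :=
  Set.indicator_of_notMem ha _

theorem truncPow_of_neg (k : ℕ) {ξ : ℝ} (hξ : ξ < 0) (a : ℝ) : truncPow k ξ a = 0 :=
  truncPow_of_notMem k fun ha => hξ.not_ge (ha.1.trans ha.2)

@[fun_prop]
theorem measurable_truncPow (k : ℕ) (ξ : ℝ) : Measurable (truncPow k ξ) :=
  (measurable_const.sub measurable_id).pow_const k |>.indicator measurableSet_Icc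

theorem abs_truncPow_le (k : ℕ) (ξ a : ℝ) :
    |truncPow k ξ a| ≤ ξ ^ k * (Set.Icc 0 ξ).indicator 1 a := by
  by_cases ha : a ∈ Set.Icc 0 ξ
  · rw [truncPow_of_mem k ha, Set.indicator_of_mem ha, Pi.one_apply, mul_one,
      abs_of_nonneg (pow_nonneg (sub_nonneg.2 ha.2) k)]
    exact pow_le_pow_left₀ (sub_nonneg.2 ha.2) (by linarith [ha.1]) k
  · simp [truncPow_of_notMem k ha, ha]

theorem integral_truncPow (k : ℕ) {ξ : ℝ} (hξ : 0 ≤ ξ) :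
    ∫ a, truncPow k ξ a = ξ ^ (k + 1) / (k + 1) := by
  simp only [truncPow]
  rw [integral_indicator measurableSet_Icc, integral_Icc_eq_integral_Ioc,
    ← intervalIntegral.integral_of_le hξ,
    intervalIntegral.integral_comp_sub_left (fun a => a ^ k), integral_pow]
  simp

/-- `(λ²/4)²` times the `k`-th Taylor coefficient of `w ↦ I₀(√(λ² w / (2κ)))`: one factor `λ²/4`
comes from `K`, the other from `L₀`. -/
noncomputable def convCoeff (κ lam : ℝ) (k : ℕ) : ℝ :=
  (lam ^ 2 / 4) ^ 2 * (lam ^ 2 / (8 * κ)) ^ k / (k.factorial : ℝ) ^ 2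

theorem summable_convCoeff_mul_pow (κ lam w : ℝ) :
    Summable fun k => convCoeff κ lam k * w ^ k := by
  refine (summable_congr fun k => ?_).1
    ((summable_pow_div_factorial_sq (lam ^ 2 / (8 * κ) * w)).mul_left ((lam ^ 2 / 4) ^ 2))
  rw [convCoeff, mul_pow]
  ring

/-- The `k`-th term of the series of `K(t - s, x - y) L₀(s, y)` in light-cone coordinates
`p = (κs + y, κs - y)`, where `ξ = κt + x` and `η = κt - x`. -/
noncomputable def coneTerm (κ lam ξ η : ℝ) (k : ℕ) (p : ℝ × ℝ) : ℝ :=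
  convCoeff κ lam k * (truncPow k ξ p.1 * truncPow k η p.2)

noncomputable def coneSeries (κ lam ξ η : ℝ) (p : ℝ × ℝ) : ℝ :=
  ∑' k, coneTerm κ lam ξ η k p

section ConeSeries

variable (κ lam ξ η : ℝ)

theorem norm_coneTerm_le (k : ℕ) (p : ℝ × ℝ) :
    ‖coneTerm κ lam ξ η k p‖ ≤
      |convCoeff κ lam k * (ξ * η) ^ k| * (Set.Icc 0 ξ ×ˢ Set.Icc 0 η).indicator 1 p := by
  have hind : 0 ≤ (Set.Icc 0 ξ ×ˢ Set.Icc 0 η).indicator (1 : ℝ × ℝ → ℝ) p :=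
    Set.indicator_nonneg (fun _ _ => zero_le_one) p
  have hprod : |truncPow k ξ p.1 * truncPow k η p.2| ≤
      (ξ * η) ^ k * (Set.Icc 0 ξ ×ˢ Set.Icc 0 η).indicator 1 p := by
    rw [abs_mul, mul_pow, ← Prod.mk.eta (p := p), Set.indicator_prod_one]
    calc |truncPow k ξ p.1| * |truncPow k η p.2|
        ≤ (ξ ^ k * (Set.Icc 0 ξ).indicator 1 p.1) * (η ^ k * (Set.Icc 0 η).indicator 1 p.2) :=
          mul_le_mul (abs_truncPow_le k ξ _) (abs_truncPow_le k η _) (abs_nonneg _)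
            ((abs_nonneg _).trans (abs_truncPow_le k ξ _))
      _ = _ := by ring
  rw [coneTerm, Real.norm_eq_abs, abs_mul, abs_mul (convCoeff κ lam k), mul_assoc]
  refine mul_le_mul_of_nonneg_left (hprod.trans ?_) (abs_nonneg _)
  exact mul_le_mul_of_nonneg_right (le_abs_self _) hind

theorem hasSum_coneTerm (p : ℝ × ℝ) :
    HasSum (fun k => coneTerm κ lam ξ η k p) (coneSeries κ lam ξ η p) :=
  ((summable_convCoeff_mul_pow κ lam (ξ * η)).abs.mul_right _).of_norm_bounded
    (fun k => norm_coneTerm_le κ lam ξ η k p) |>.hasSum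

theorem integrable_indicator_Icc_prod_Icc :
    Integrable ((Set.Icc 0 ξ ×ˢ Set.Icc 0 η).indicator (1 : ℝ × ℝ → ℝ)) :=
  (integrableOn_const (isCompact_Icc.prod isCompact_Icc).measure_lt_top.ne).integrable_indicator
    (measurableSet_Icc.prod measurableSet_Icc)

theorem integrable_coneSeries : Integrable (coneSeries κ lam ξ η) :=
  Integrable.of_hasSum_of_norm_le_mul (fun k => by unfold coneTerm; fun_prop)
    (summable_convCoeff_mul_pow κ lam (ξ * η)).abs (integrable_indicator_Icc_prod_Icc ξ η)
    (norm_coneTerm_le κ lam ξ η) (hasSum_coneTerm κ lam ξ η)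

theorem hasSum_integral_coneTerm :
    HasSum (fun k => ∫ p, coneTerm κ lam ξ η k p) (∫ p, coneSeries κ lam ξ η p) :=
  hasSum_integral_of_norm_le_mul (fun k => by unfold coneTerm; fun_prop)
    (summable_convCoeff_mul_pow κ lam (ξ * η)).abs (integrable_indicator_Icc_prod_Icc ξ η)
    (norm_coneTerm_le κ lam ξ η) (hasSum_coneTerm κ lam ξ η)

theorem integral_coneTerm (k : ℕ) :
    ∫ p, coneTerm κ lam ξ η k p =
      convCoeff κ lam k * ((∫ a, truncPow k ξ a) * ∫ b, truncPow k η b) := by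
  rw [← integral_prod_mul (truncPow k ξ) (truncPow k η), ← integral_const_mul]
  rfl

end ConeSeries

theorem Kker_eq_ite (κ lam τ z : ℝ) :
    Kker κ lam τ z =
      if 0 ≤ κ * τ + z ∧ 0 ≤ κ * τ - z then
        lam ^ 2 / 4 * besselI0 (√(lam ^ 2 * ((κ * τ + z) * (κ * τ - z)) / (2 * κ)))
      else 0 := by
  have hcone : |z| ≤ κ * τ ↔ 0 ≤ κ * τ + z ∧ 0 ≤ κ * τ - z := by
    rw [abs_le]; constructor <;> rintro ⟨h₁, h₂⟩ <;> constructor <;> linarith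
  rw [Kker, sq_sub_sq]
  exact if_congr hcone rfl rfl

theorem waveKernel_eq_ite {κ : ℝ} (hκ : 0 < κ) (s y : ℝ) :
    waveKernel κ s y = if 0 ≤ κ * s + y ∧ 0 ≤ κ * s - y then 1 / 2 else 0 := by
  have hcone : 0 ≤ s ∧ |y| ≤ κ * s ↔ 0 ≤ κ * s + y ∧ 0 ≤ κ * s - y := by
    rw [abs_le]
    constructor
    · rintro ⟨-, h₁, h₂⟩; constructor <;> linarith
    · rintro ⟨h₁, h₂⟩
      exact ⟨nonneg_of_mul_nonneg_right (by linarith) hκ, by linarith, by linarith⟩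
  rw [waveKernel, if_congr hcone rfl rfl]

theorem hasSum_coneTerm_Kker_mul_sq_waveKernel {κ : ℝ} (hκ : 0 < κ) (lam t x s y : ℝ) :
    HasSum (fun k => coneTerm κ lam (κ * t + x) (κ * t - x) k (κ * s + y, κ * s - y))
      (Kker κ lam (t - s) (x - y) * (lam ^ 2 * waveKernel κ s y ^ 2)) := by
  rw [Kker_eq_ite, waveKernel_eq_ite hκ,
    show κ * (t - s) + (x - y) = κ * t + x - (κ * s + y) by ring,
    show κ * (t - s) - (x - y) = κ * t - x - (κ * s - y) by ring]
  simp only [coneTerm]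
  set ξ := κ * t + x
  set η := κ * t - x
  set a := κ * s + y
  set b := κ * s - y
  by_cases hab : a ∈ Set.Icc 0 ξ ∧ b ∈ Set.Icc 0 η
  · obtain ⟨⟨ha₀, haξ⟩, ⟨hb₀, hbη⟩⟩ := hab
    set u := lam ^ 2 * ((ξ - a) * (η - b)) / (2 * κ) with hu_def
    have hu : 0 ≤ u := by
      have : 0 ≤ ξ - a := by linarith
      have : 0 ≤ η - b := by linarith
      positivity
    have hterm : ∀ k, convCoeff κ lam k * (truncPow k ξ a * truncPow k η b) =
        (lam ^ 2 / 4) ^ 2 * ((u / 4) ^ k / (k.factorial : ℝ) ^ 2) := fun k => by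
      rw [truncPow_of_mem k ⟨ha₀, haξ⟩, truncPow_of_mem k ⟨hb₀, hbη⟩, convCoeff,
        show u / 4 = lam ^ 2 / (8 * κ) * (ξ - a) * (η - b) by rw [hu_def]; ring,
        mul_pow, mul_pow]
      ring
    rw [if_pos ⟨by linarith, by linarith⟩, if_pos ⟨ha₀, hb₀⟩, funext hterm,
      show lam ^ 2 / 4 * besselI0 √u * (lam ^ 2 * (1 / 2) ^ 2) = (lam ^ 2 / 4) ^ 2 * besselI0 √u
        by ring]
    exact (hasSum_besselI0_sqrt hu).mul_left _
  · have hzero : ∀ k, truncPow k ξ a * truncPow k η b = 0 := fun k => by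
      rcases not_and_or.1 hab with h | h <;> simp [truncPow_of_notMem k h]
    simp only [hzero, mul_zero]
    split_ifs with h₁ h₂
    · exact absurd ⟨⟨h₂.1, by linarith [h₁.1]⟩, h₂.2, by linarith [h₁.2]⟩ hab
    all_goals simp

theorem hasSum_integral_coneTerm_Kker_sub {κ : ℝ} (hκ : 0 < κ) (lam t x : ℝ) :
    HasSum (fun k => (2 * κ)⁻¹ * ∫ p, coneTerm κ lam (κ * t + x) (κ * t - x) k p)
      (Kker κ lam t x - lam ^ 2 * waveKernel κ t x ^ 2) := by
  simp only [integral_coneTerm]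
  rw [Kker_eq_ite, waveKernel_eq_ite hκ]
  split_ifs with hx
  · obtain ⟨hξ, hη⟩ := hx
    set u := lam ^ 2 * ((κ * t + x) * (κ * t - x)) / (2 * κ) with hu_def
    have hu : 0 ≤ u := by positivity
    have hI := (hasSum_nat_add_iff' 1).2 (hasSum_besselI0_sqrt hu) |>.mul_left (lam ^ 2 / 4)
    simp only [Finset.range_one, Finset.sum_singleton, pow_zero, Nat.factorial_zero,
      Nat.cast_one, one_pow, div_one] at hI
    rw [show lam ^ 2 / 4 * besselI0 √u - lam ^ 2 * (1 / 2) ^ 2 = lam ^ 2 / 4 * (besselI0 √u - 1)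
      by ring]
    have hterm : ∀ k, (2 * κ)⁻¹ * (convCoeff κ lam k *
        ((∫ a, truncPow k (κ * t + x) a) * ∫ b, truncPow k (κ * t - x) b)) =
        lam ^ 2 / 4 * ((u / 4) ^ (k + 1) / ((k + 1).factorial : ℝ) ^ 2) := fun k => by
      rw [integral_truncPow k hξ, integral_truncPow k hη, convCoeff, Nat.factorial_succ,
        show u / 4 = lam ^ 2 / (8 * κ) * ((κ * t + x) * (κ * t - x)) by rw [hu_def]; ring,
        mul_pow, mul_pow, pow_succ (lam ^ 2 / (8 * κ))]
      push_cast
      field_simp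
      ring
    rw [funext hterm]
    exact hI
  · have hzero : ∀ k,
        (∫ a, truncPow k (κ * t + x) a) * ∫ b, truncPow k (κ * t - x) b = 0 := fun k => by
      rcases not_and_or.1 hx with h | h <;> simp [truncPow_of_neg k (not_le.1 h)]
    simp [hzero]

theorem Kker_mul_sq_waveKernel_eq_zero_of_notMem_Icc {κ : ℝ} (hκ : 0 < κ) (lam : ℝ)
    {t s : ℝ} (hs : s ∉ Set.Icc 0 t) (x y : ℝ) :
    Kker κ lam (t - s) (x - y) * (lam ^ 2 * waveKernel κ s y ^ 2) = 0 := by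
  rcases not_and_or.1 hs with hs | hs
  · simp [waveKernel, hs]
  · have : ¬ |x - y| ≤ κ * (t - s) := fun h =>
      not_lt.2 (abs_nonneg (x - y)) (h.trans_lt (mul_neg_of_pos_of_neg hκ (by linarith)))
    simp [Kker, this]

theorem Kker_conv_L0 (κ lam t x : ℝ) (hκ : 0 < κ) (ht : 0 < t) :
    ∫ s in (0:ℝ)..t, ∫ y : ℝ,
        Kker κ lam (t - s) (x - y) * (lam ^ 2 * (waveKernel κ s y) ^ 2)
      = Kker κ lam t x - lam ^ 2 * (waveKernel κ t x) ^ 2 := by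
  set ξ := κ * t + x
  set η := κ * t - x
  calc ∫ s in (0:ℝ)..t, ∫ y : ℝ,
        Kker κ lam (t - s) (x - y) * (lam ^ 2 * (waveKernel κ s y) ^ 2)
      = ∫ s, ∫ y, Kker κ lam (t - s) (x - y) * (lam ^ 2 * (waveKernel κ s y) ^ 2) := by
        rw [intervalIntegral.integral_of_le ht.le, ← integral_Icc_eq_integral_Ioc,
          setIntegral_eq_integral_of_forall_compl_eq_zero fun s hs => by
            simp [Kker_mul_sq_waveKernel_eq_zero_of_notMem_Icc hκ lam hs]]
    _ = ∫ s, ∫ y, coneSeries κ lam ξ η (κ * s + y, κ * s - y) := by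
        congr 1 with s
        congr 1 with y
        exact (hasSum_coneTerm_Kker_mul_sq_waveKernel hκ lam t x s y).tsum_eq.symm
    _ = (2 * κ)⁻¹ * ∫ p, coneSeries κ lam ξ η p := by
        rw [integral_integral_lightCone (integrable_coneSeries κ lam ξ η) hκ.ne',
          abs_of_pos (by positivity), smul_eq_mul]
    _ = Kker κ lam t x - lam ^ 2 * (waveKernel κ t x) ^ 2 :=
        ((hasSum_integral_coneTerm κ lam ξ η).mul_left _).unique
          (hasSum_integral_coneTerm_Kker_sub hκ lam t x)
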